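/- Let G be a planar graph, let v be a vertex of G with distinct neighbours u and w, and suppose some induced 6-cycle of G contains the path u–v–w. Write X₁ = X₁^{uvw}, X₂ = X₂^{uvw}, X₃ = X₃^{uvw}. Then the bipartite subgraph of G induced between X₁ and X₂ contains no cycle, the bipartite subgraph of G induced between X₂ and X₃ contains no cycle, and the number of induced 6-cycles of G containing the path u–v–w is at most |X₃|·(|X₁| + |X₂| − 1) and also at most |X₁|·(|X₂| + |X₃| − 1). -/

import Mathlib

open SimpleGraph

/-- `H` is a minor of `G`: there is a family of nonempty, connected, pairwise disjoint
branch sets in `G`, one for each vertex of `H`, such that adjacent vertices of `H`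
have adjacent branch sets. -/
def IsMinorOf {W : Type*} {V : Type*} (H : SimpleGraph W) (G : SimpleGraph V) : Prop :=
  ∃ φ : W → Set V,
    (∀ w, (G.induce (φ w)).Connected) ∧
    (Pairwise fun w₁ w₂ => Disjoint (φ w₁) (φ w₂)) ∧
    ∀ ⦃w₁ w₂⦄, H.Adj w₁ w₂ → ∃ x ∈ φ w₁, ∃ y ∈ φ w₂, G.Adj x y

/-- A graph is planar iff (by Wagner's theorem) it has no `K₅` minor and no `K₃,₃` minor. -/
def SimpleGraph.Planar {V : Type*} (G : SimpleGraph V) : Prop :=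
  ¬ IsMinorOf (completeGraph (Fin 5)) G ∧
  ¬ IsMinorOf (completeBipartiteGraph (Fin 3) (Fin 3)) G

/-- `s` is a set of `m` vertices of `G` whose induced subgraph is a cycle of length `m`. -/
def IsIndCycle {V : Type*} (G : SimpleGraph V) (m : ℕ) (s : Finset V) : Prop :=
  s.card = m ∧ Nonempty ((G.induce (s : Set V)) ≃g (cycleGraph m))

/-- The number of induced 6-cycles of `G`. -/
noncomputable def c6Count {V : Type*} [Fintype V] (G : SimpleGraph V) : ℕ :=
  {s : Finset V | IsIndCycle G 6 s}.ncard

/-- The number of induced 6-cycles of `G` containing the vertex `v`. -/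
noncomputable def c6CountAt {V : Type*} [Fintype V] (G : SimpleGraph V) (v : V) : ℕ :=
  {s : Finset V | IsIndCycle G 6 s ∧ v ∈ s}.ncard

/-- `f_I(n, C₆)`: the maximum number of induced 6-cycles over all planar graphs
on `n` vertices. -/
noncomputable def fI (n : ℕ) : ℕ :=
  sSup {m | ∃ G : SimpleGraph (Fin n), G.Planar ∧ c6Count G = m}

def h0 (n : ℕ) : ℕ :=
  if n % 3 = 0 then (n / 3 - 1) ^ 3
  else if n % 3 = 1 then ((n - 4) / 3) ^ 2 * ((n - 1) / 3)
  else ((n - 2) / 3) ^ 2 * ((n - 5) / 3)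

def h1 (n : ℕ) : ℕ :=
  if n % 3 = 0 then (n / 3 - 1) ^ 2
  else if n % 3 = 1 then ((n - 4) / 3) ^ 2
  else ((n - 2) / 3) * ((n - 5) / 3)

/-- `x` and `y` are principal neighbours in `G`: they are adjacent and some induced
6-cycle of `G` contains both of them. -/
def PrincipalNbr {V : Type*} (G : SimpleGraph V) (x y : V) : Prop :=
  G.Adj x y ∧ ∃ s : Finset V, IsIndCycle G 6 s ∧ x ∈ s ∧ y ∈ s

/-- `X^{uvw}`: the vertices of `G - {u,v,w}` lying in some induced 6-cycle of `G`
containing the path `u-v-w` (i.e. containing `u`, `v` and `w`). -/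
def Xset {V : Type*} (G : SimpleGraph V) (u v w : V) : Set V :=
  {x | x ≠ u ∧ x ≠ v ∧ x ≠ w ∧
    ∃ s : Finset V, IsIndCycle G 6 s ∧ u ∈ s ∧ v ∈ s ∧ w ∈ s ∧ x ∈ s}

def X1set {V : Type*} (G : SimpleGraph V) (u v w : V) : Set V :=
  Xset G u v w ∩ G.neighborSet u

def X3set {V : Type*} (G : SimpleGraph V) (u v w : V) : Set V :=
  Xset G u v w ∩ G.neighborSet w

def X2set {V : Type*} (G : SimpleGraph V) (u v w : V) : Set V :=
  Xset G u v w \ (X1set G u v w ∪ X3set G u v w)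

/-- The bipartite subgraph of `G` induced between the disjoint vertex sets `S` and `T`:
the graph on `S ∪ T` whose edges are exactly the edges of `G` with one endpoint in `S`
and one in `T`. -/
def bipBetween {V : Type*} (G : SimpleGraph V) (S T : Set V) : SimpleGraph ↑(S ∪ T) where
  Adj x y := G.Adj x y ∧ ((↑x ∈ S ∧ ↑y ∈ T) ∨ (↑x ∈ T ∧ ↑y ∈ S))
  symm := by
    constructor
    intro x y ⟨h, h2⟩
    exact ⟨h.symm, (h2.imp And.symm And.symm).symm⟩
  loopless := by
    constructor
    intro x ⟨h, _⟩
    exact G.loopless.irrefl _ h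

/-- `a b c d e f` are the vertices, in cyclic order, of an induced 6-cycle of `G`. -/
def IsIndC6On {V : Type*} [DecidableEq V] (G : SimpleGraph V) (a b c d e f : V) : Prop :=
  ([a, b, c, d, e, f] : List V).Nodup ∧
  IsIndCycle G 6 {a, b, c, d, e, f} ∧
  G.Adj a b ∧ G.Adj b c ∧ G.Adj c d ∧ G.Adj d e ∧ G.Adj e f ∧ G.Adj f a ∧
  ¬ G.Adj a c ∧ ¬ G.Adj a d ∧ ¬ G.Adj a e ∧
  ¬ G.Adj b d ∧ ¬ G.Adj b e ∧ ¬ G.Adj b f ∧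
  ¬ G.Adj c e ∧ ¬ G.Adj c f ∧ ¬ G.Adj d f

/-- `x` and `y` are consecutive entries (in either order) of the list `l`. -/
def ListConsec {V : Type*} (l : List V) (x y : V) : Prop :=
  ∃ i : ℕ, (l[i]? = some x ∧ l[i + 1]? = some y) ∨
           (l[i]? = some y ∧ l[i + 1]? = some x)

/-- The data witnessing that `G` belongs to the family `𝓕_n` (with `n = Fintype.card V`):
the vertex set is partitioned as `{u₁,u₂,u₃} ∪ A ∪ B ∪ C` with `|A|, |B|, |C|` as equal
as possible, every vertex of `A` is joined to `u₁, u₂`, every vertex of `B` to `u₂, u₃`,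
every vertex of `C` to `u₃, u₁`, and all remaining edges are consecutive along some
fixed orderings (paths) of `A`, `B`, `C`. -/
def FWitness {V : Type*} [Fintype V] [DecidableEq V] (G : SimpleGraph V) (u1 u2 u3 : V)
    (A B C : Finset V) : Prop :=
  u1 ≠ u2 ∧ u1 ≠ u3 ∧ u2 ≠ u3 ∧
  u1 ∉ A ∪ B ∪ C ∧ u2 ∉ A ∪ B ∪ C ∧ u3 ∉ A ∪ B ∪ C ∧
  Disjoint A B ∧ Disjoint A C ∧ Disjoint B C ∧
  ({u1, u2, u3} : Finset V) ∪ A ∪ B ∪ C = Finset.univ ∧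
  A.card + B.card + C.card = Fintype.card V - 3 ∧
  A.card ≤ B.card + 1 ∧ B.card ≤ A.card + 1 ∧
  A.card ≤ C.card + 1 ∧ C.card ≤ A.card + 1 ∧
  B.card ≤ C.card + 1 ∧ C.card ≤ B.card + 1 ∧
  (∀ a ∈ A, G.Adj u1 a ∧ G.Adj u2 a) ∧
  (∀ b ∈ B, G.Adj u2 b ∧ G.Adj u3 b) ∧
  (∀ c ∈ C, G.Adj u3 c ∧ G.Adj u1 c) ∧
  ∃ la lb lc : List V,
    la.Nodup ∧ lb.Nodup ∧ lc.Nodup ∧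
    la.toFinset = A ∧ lb.toFinset = B ∧ lc.toFinset = C ∧
    ∀ x y, G.Adj x y →
      (x = u1 ∧ (y ∈ A ∨ y ∈ C)) ∨ (y = u1 ∧ (x ∈ A ∨ x ∈ C)) ∨
      (x = u2 ∧ (y ∈ A ∨ y ∈ B)) ∨ (y = u2 ∧ (x ∈ A ∨ x ∈ B)) ∨
      (x = u3 ∧ (y ∈ B ∨ y ∈ C)) ∨ (y = u3 ∧ (x ∈ B ∨ x ∈ C)) ∨
      ListConsec la x y ∨ ListConsec lb x y ∨ ListConsec lc x y

/-- `G` belongs to the family `𝓕_n`, where `n = Fintype.card V`. -/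
def InFFamily {V : Type*} [Fintype V] [DecidableEq V] (G : SimpleGraph V) : Prop :=
  ∃ (u1 u2 u3 : V) (A B C : Finset V), FWitness G u1 u2 u3 A B C

/-!
An induced 6-cycle through the path `u - v - w` reads `u v w x y z` with `x ∈ X₃`, `y ∈ X₂` and
`z ∈ X₁`, so it is determined by `x` together with the edge `yz` of the bipartite graph between
`X₁` and `X₂`. That graph is a forest, hence has at most `|X₁| + |X₂| - 1` edges: a cycle
`y z₁ … z₂ y` in it with `y ∈ X₂` gives a `K₃,₃` minor with branch sets `{z₁}`, `{z₂}`,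
`{v, w} ∪ X₃` on one side and `{y}`, the rest of the cycle, `{u}` on the other, because the
vertices of `X₁` are adjacent to `u` and every vertex of `X₂` has a neighbour in `X₃ ⊆ N(w)`.
Exchanging `u` and `w` gives the statements for `X₂` and `X₃`.
-/

open Function

section BipBetween

variable {V : Type*} {G : SimpleGraph V} {S T : Set V}

lemma bipBetween_mem_right_of_adj (hST : Disjoint S T) {x y : ↑(S ∪ T)}
    (h : (bipBetween G S T).Adj x y) (hx : ↑x ∈ S) : ↑y ∈ T := by
  rcases h.2 with ⟨-, hy⟩ | ⟨hxT, -⟩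
  exacts [hy, (Set.disjoint_left.mp hST hx hxT).elim]

lemma bipBetween_mem_left_of_adj (hST : Disjoint S T) {x y : ↑(S ∪ T)}
    (h : (bipBetween G S T).Adj x y) (hx : ↑x ∈ T) : ↑y ∈ S := by
  rcases h.2 with ⟨hxS, -⟩ | ⟨-, hy⟩
  exacts [(Set.disjoint_left.mp hST hxS hx).elim, hy]

lemma isAcyclic_bipBetween_comm :
    (bipBetween G S T).IsAcyclic ↔ (bipBetween G T S).IsAcyclic :=
  Iso.isAcyclic_iff
    { Equiv.setCongr (Set.union_comm S T) with map_rel_iff' := and_congr_right' or_comm }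

lemma SimpleGraph.IsAcyclic.ncard_edgeSet_le [Finite V] (h : G.IsAcyclic) :
    G.edgeSet.ncard ≤ Nat.card V - 1 := by
  rcases isEmpty_or_nonempty V with hV | hV
  · simp [Set.eq_empty_of_isEmpty G.edgeSet]
  · classical
    have := Fintype.ofFinite V
    obtain ⟨F, hGF, -, hF⟩ := connected_top.exists_isTree_le_of_le_of_isAcyclic le_top h
    have hcard := hF.card_edgeFinset
    calc G.edgeSet.ncard ≤ F.edgeSet.ncard := Set.ncard_le_ncard (edgeSet_mono hGF)
      _ = Nat.card V - 1 := by
        rw [← coe_edgeFinset, Set.ncard_coe_finset, Nat.card_eq_fintype_card]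
        omega

lemma ncard_adj_pairs_le_ncard_edgeSet_bipBetween [Finite V] (hST : Disjoint S T) :
    {p : V × V | p.1 ∈ T ∧ p.2 ∈ S ∧ G.Adj p.1 p.2}.ncard ≤
      (bipBetween G S T).edgeSet.ncard := by
  calc _ ≤ (Sym2.map Subtype.val '' (bipBetween G S T).edgeSet).ncard := by
        refine Set.ncard_le_ncard_of_injOn (fun p => s(p.1, p.2)) ?_ ?_
        · rintro ⟨y, z⟩ ⟨hy, hz, hyz⟩
          exact ⟨s(⟨y, Or.inr hy⟩, ⟨z, Or.inl hz⟩), ⟨hyz, Or.inr ⟨hy, hz⟩⟩, rfl⟩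
        · rintro ⟨y, z⟩ ⟨hy, hz, -⟩ ⟨y', z'⟩ ⟨hy', hz', -⟩ h
          obtain ⟨rfl, rfl⟩ | ⟨rfl, rfl⟩ := Sym2.eq_iff.mp h
          · rfl
          · exact (Set.disjoint_left.mp hST hz' hy).elim
    _ ≤ _ := Set.ncard_image_le

lemma SimpleGraph.IsAcyclic.ncard_adj_pairs_le [Finite V] (hST : Disjoint S T)
    (h : (bipBetween G S T).IsAcyclic) :
    {p : V × V | p.1 ∈ T ∧ p.2 ∈ S ∧ G.Adj p.1 p.2}.ncard ≤ S.ncard + T.ncard - 1 := by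
  refine (ncard_adj_pairs_le_ncard_edgeSet_bipBetween hST).trans (h.ncard_edgeSet_le.trans ?_)
  rw [Nat.card_coe_set_eq, Set.ncard_union_eq hST]

end BipBetween

lemma SimpleGraph.Walk.IsCycle.exists_walk_avoiding {V : Type*} {G : SimpleGraph V} {y : V}
    {c : G.Walk y y} (hc : c.IsCycle) (hL : 4 ≤ c.length) :
    ∃ r : G.Walk (c.getVert 2) (c.getVert (c.length - 2)),
      y ∉ r.support ∧ c.snd ∉ r.support ∧ c.penultimate ∉ r.support := by
  have hend : (c.drop 2).getVert (c.length - 4) = c.getVert (c.length - 2) := by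
    rw [Walk.drop_getVert]
    congr 1
    omega
  set r := ((c.drop 2).take (c.length - 4)).copy rfl hend
  have hout : ∀ j, (j = 1 ∨ c.length - 1 ≤ j) → j ≤ c.length → c.getVert j ∉ r.support := by
    intro j hj hjL hr
    rw [Walk.support_copy, Walk.mem_support_iff_exists_getVert] at hr
    obtain ⟨i, hi, -⟩ := hr
    rw [Walk.take_getVert, Walk.drop_getVert] at hi
    have := hc.getVert_injOn (by simp; omega) (by simp; omega) hi
    omega
  have hy := hout c.length (by omega) le_rfl
  rw [c.getVert_length] at hy
  exact ⟨r, hy, hout 1 (by omega) (by omega), hout _ (by omega) (by omega)⟩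

section Minor

variable {V : Type*} {G : SimpleGraph V} {S T : Set V}

lemma exists_isCycle_of_not_isAcyclic_bipBetween (hST : Disjoint S T)
    (h : ¬ (bipBetween G S T).IsAcyclic) :
    ∃ (y : ↑(S ∪ T)) (c : (bipBetween G S T).Walk y y), ↑y ∈ T ∧ c.IsCycle := by
  classical
  simp only [IsAcyclic, not_forall, not_not] at h
  obtain ⟨x, c, hc⟩ := h
  rcases x.2 with hxS | hxT
  · have hsnd : c.snd ∈ c.support := c.getVert_mem_support 1
    exact ⟨c.snd, c.rotate _ hsnd,
      bipBetween_mem_right_of_adj hST (c.adj_snd hc.not_nil) hxS,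
      (Walk.isCycle_rotate hsnd).mpr hc⟩
  · exact ⟨x, c, hxT, hc⟩

/-- `y z₁ … z₂ y` is a cycle of the bipartite graph and `A` the set of its other vertices. -/
lemma exists_cycle_split_of_not_isAcyclic_bipBetween (hST : Disjoint S T)
    (h : ¬ (bipBetween G S T).IsAcyclic) :
    ∃ y ∈ T, ∃ z₁ ∈ S, ∃ z₂ ∈ S, ∃ A ⊆ S ∪ T, (G.induce A).Connected ∧ z₁ ≠ z₂ ∧
      G.Adj y z₁ ∧ G.Adj y z₂ ∧ y ∉ A ∧ z₁ ∉ A ∧ z₂ ∉ A ∧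
      (∃ t ∈ A, t ∈ T ∧ G.Adj z₁ t) ∧ ∃ t ∈ A, G.Adj z₂ t := by
  obtain ⟨y, c, hyT, hc⟩ := exists_isCycle_of_not_isAcyclic_bipBetween hST h
  have h3 := hc.three_le_length
  have hz₁ : ↑c.snd ∈ S := bipBetween_mem_left_of_adj hST (c.adj_snd hc.not_nil) hyT
  have hz₂ : ↑c.penultimate ∈ S :=
    bipBetween_mem_left_of_adj hST (c.adj_penultimate hc.not_nil).symm hyT
  have hadj₁ : (bipBetween G S T).Adj c.snd (c.getVert 2) := c.adj_getVert_succ (by omega)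
  have hadj₂ : (bipBetween G S T).Adj (c.getVert (c.length - 2)) c.penultimate := by
    have := c.adj_getVert_succ (i := c.length - 2) (by omega)
    rwa [show c.length - 2 + 1 = c.length - 1 by omega] at this
  have ht₁ : ↑(c.getVert 2) ∈ T := bipBetween_mem_right_of_adj hST hadj₁ hz₁
  have hL : 4 ≤ c.length := by
    by_contra hL
    have : c.getVert 2 = c.penultimate := by
      rw [Walk.penultimate]
      congr 1
      omega
    exact Set.disjoint_left.mp hST hz₂ (this ▸ ht₁)
  obtain ⟨r, hyr, hz₁r, hz₂r⟩ := hc.exists_walk_avoiding hL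
  let ι : bipBetween G S T →g G := ⟨Subtype.val, fun h => h.1⟩
  have hA : ∀ x : ↑(S ∪ T), ↑x ∈ (r.map ι).support ↔ x ∈ r.support := by
    simp [Walk.support_map, ι]
  refine ⟨y, hyT, c.snd, hz₁, c.penultimate, hz₂, {t | t ∈ (r.map ι).support}, ?_,
    (r.map ι).connected_induce_support, fun h => hc.snd_ne_penultimate (Subtype.ext h),
    (c.adj_snd hc.not_nil).1, (c.adj_penultimate hc.not_nil).1.symm,
    (hA y).not.mpr hyr, (hA _).not.mpr hz₁r, (hA _).not.mpr hz₂r,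
    ⟨_, (hA _).mpr r.start_mem_support, ht₁, hadj₁.1⟩,
    ⟨_, (hA _).mpr r.end_mem_support, hadj₂.1.symm⟩⟩
  intro t ht
  rw [Set.mem_ofPred_eq, Walk.support_map, List.mem_map] at ht
  obtain ⟨x, -, rfl⟩ := ht
  exact x.2

lemma connected_induce_singleton (x : V) : (G.induce {x}).Connected := by
  rw [induce_singleton_eq_top]
  exact connected_top

lemma connected_induce_of_forall_adj {s : Set V} {c : V} (hc : c ∈ s)
    (h : ∀ t ∈ s, t ≠ c → G.Adj c t) : (G.induce s).Connected := by
  rw [connected_iff_exists_forall_reachable]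
  refine ⟨⟨c, hc⟩, fun ⟨t, ht⟩ => ?_⟩
  by_cases htc : t = c
  · subst htc
    rfl
  · exact Adj.reachable (G := G.induce s) (h t ht htc)

lemma pairwise_disjoint_three {A B C : Set V} (hAB : Disjoint A B) (hAC : Disjoint A C)
    (hBC : Disjoint B C) : Pairwise (Disjoint on ![A, B, C]) := by
  intro i j hij
  fin_cases i <;> fin_cases j <;> simp_all [Function.onFun, Disjoint.symm]

lemma isMinorOf_K33_of_branchSets (L R : Fin 3 → Set V)
    (hconn : ∀ i, (G.induce (L i)).Connected ∧ (G.induce (R i)).Connected)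
    (hL : Pairwise (Disjoint on L)) (hR : Pairwise (Disjoint on R))
    (hLR : ∀ i j, Disjoint (L i) (R j)) (hadj : ∀ i j, ∃ x ∈ L i, ∃ y ∈ R j, G.Adj x y) :
    IsMinorOf (completeBipartiteGraph (Fin 3) (Fin 3)) G := by
  refine ⟨Sum.elim L R, ?_, ?_, ?_⟩
  · rintro (i | i)
    exacts [(hconn i).1, (hconn i).2]
  · rintro (i | i) (j | j) hij
    · exact hL fun h => hij (congrArg _ h)
    · exact hLR i j
    · exact (hLR j i).symm
    · exact hR fun h => hij (congrArg _ h)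
  · rintro (i | i) (j | j) hij
    · simp at hij
    · exact hadj i j
    · obtain ⟨x, hx, y, hy, hxy⟩ := hadj j i
      exact ⟨y, hy, x, hx, hxy.symm⟩
    · simp at hij

lemma isMinorOf_K33_of_not_isAcyclic_bipBetween {Q : Set V} {a : V} (hST : Disjoint S T)
    (hQ : Disjoint Q (S ∪ T)) (haQ : a ∉ Q) (haST : a ∉ S ∪ T)
    (hQconn : (G.induce Q).Connected) (hSa : ∀ s ∈ S, G.Adj a s)
    (hTQ : ∀ t ∈ T, ∃ q ∈ Q, G.Adj t q) (haQadj : ∃ q ∈ Q, G.Adj a q)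
    (h : ¬ (bipBetween G S T).IsAcyclic) :
    IsMinorOf (completeBipartiteGraph (Fin 3) (Fin 3)) G := by
  obtain ⟨y, hyT, z₁, hz₁S, z₂, hz₂S, A, hAST, hA, hz, hyz₁, hyz₂, hyA, hz₁A, hz₂A,
    ⟨t₁, ht₁A, ht₁, hzt₁⟩, t₂, ht₂A, hzt₂⟩ := exists_cycle_split_of_not_isAcyclic_bipBetween hST h
  obtain ⟨q₁, hq₁, hyq₁⟩ := hTQ y hyT
  obtain ⟨q₂, hq₂, htq₂⟩ := hTQ t₁ ht₁
  obtain ⟨q₃, hq₃, haq₃⟩ := haQadj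
  have hout : ∀ {x}, x ∈ S ∪ T → x ∉ Q ∧ x ≠ a := fun hx =>
    ⟨fun hxQ => Set.disjoint_left.mp hQ hxQ hx, fun hxa => haST (hxa ▸ hx)⟩
  obtain ⟨hz₁Q, hz₁a⟩ := hout (Or.inl hz₁S)
  obtain ⟨hz₂Q, hz₂a⟩ := hout (Or.inl hz₂S)
  obtain ⟨hyQ, hya⟩ := hout (Or.inr hyT)
  have hz₁y : z₁ ≠ y := fun h => Set.disjoint_left.mp hST hz₁S (h ▸ hyT)
  have hz₂y : z₂ ≠ y := fun h => Set.disjoint_left.mp hST hz₂S (h ▸ hyT)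
  have haA : a ∉ A := fun haA => haST (hAST haA)
  refine isMinorOf_K33_of_branchSets ![{z₁}, {z₂}, Q] ![{y}, A, {a}] ?_
    (pairwise_disjoint_three (Set.disjoint_singleton.mpr hz)
      (Set.disjoint_singleton_left.mpr hz₁Q) (Set.disjoint_singleton_left.mpr hz₂Q))
    (pairwise_disjoint_three (Set.disjoint_singleton_left.mpr hyA)
      (Set.disjoint_singleton.mpr hya) (Set.disjoint_singleton_right.mpr haA)) ?_ ?_
  · intro i
    fin_cases i
    exacts [⟨connected_induce_singleton _, connected_induce_singleton _⟩,
      ⟨connected_induce_singleton _, hA⟩, ⟨hQconn, connected_induce_singleton _⟩]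
  · intro i j
    fin_cases i <;> fin_cases j <;>
      simp [Set.disjoint_singleton_left, Set.disjoint_singleton_right, hz₁y, hz₂y, hz₁A, hz₂A,
        hz₁a, hz₂a, hyQ, haQ, hQ.mono_right hAST]
  · intro i j
    fin_cases i <;> fin_cases j
    exacts [⟨z₁, rfl, y, rfl, hyz₁.symm⟩, ⟨z₁, rfl, t₁, ht₁A, hzt₁⟩,
      ⟨z₁, rfl, a, rfl, (hSa z₁ hz₁S).symm⟩, ⟨z₂, rfl, y, rfl, hyz₂.symm⟩,
      ⟨z₂, rfl, t₂, ht₂A, hzt₂⟩, ⟨z₂, rfl, a, rfl, (hSa z₂ hz₂S).symm⟩,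
      ⟨q₁, hq₁, y, rfl, hyq₁.symm⟩, ⟨q₂, hq₂, t₁, ht₁A, htq₂.symm⟩, ⟨q₃, hq₃, a, rfl, haq₃.symm⟩]

end Minor

section Hexagons

variable {V : Type*} {G : SimpleGraph V} {u v w : V}

lemma cycleGraph_six_exists_embedding_of_adj {a b c : Fin 6} (hab : (cycleGraph 6).Adj a b)
    (hac : (cycleGraph 6).Adj a c) (hbc : b ≠ c) :
    ∃ σ : cycleGraph 6 ↪g cycleGraph 6, σ 0 = b ∧ σ 1 = a ∧ σ 2 = c := by
  have key : ∀ a b c : Fin 6, (cycleGraph 6).Adj a b → (cycleGraph 6).Adj a c → b ≠ c →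
      let σ : Fin 6 → Fin 6 := fun i => a + (c - a) * (i - 1)
      Injective σ ∧ (∀ i j, (cycleGraph 6).Adj (σ i) (σ j) ↔ (cycleGraph 6).Adj i j) ∧
        σ 0 = b ∧ σ 1 = a ∧ σ 2 = c := by
    decide
  obtain ⟨hinj, hadj, h0, h1, h2⟩ := key a b c hab hac hbc
  exact ⟨⟨⟨_, hinj⟩, hadj _ _⟩, h0, h1, h2⟩

lemma IsIndCycle.exists_embedding [DecidableEq V] {s : Finset V} (hs : IsIndCycle G 6 s)
    (hus : u ∈ s) (hvs : v ∈ s) (hws : w ∈ s) (hu : G.Adj v u) (hw : G.Adj v w) (huw : u ≠ w) :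
    ∃ g : cycleGraph 6 ↪g G, g 0 = u ∧ g 1 = v ∧ g 2 = w ∧ s = {u, v, w, g 3, g 4, g 5} := by
  obtain ⟨hcard, ⟨e⟩⟩ := hs
  let f : cycleGraph 6 ↪g G := (Embedding.induce (s : Set V)).comp e.symm.toEmbedding
  have hf : ∀ x (hx : x ∈ s), f (e ⟨x, hx⟩) = x := fun x hx => by simp [f]
  obtain ⟨σ, h0, h1, h2⟩ := cycleGraph_six_exists_embedding_of_adj
    (e.map_adj_iff.mpr (show (G.induce s).Adj ⟨v, hvs⟩ ⟨u, hus⟩ from hu))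
    (e.map_adj_iff.mpr (show (G.induce s).Adj ⟨v, hvs⟩ ⟨w, hws⟩ from hw))
    (fun h => huw (congrArg Subtype.val (e.injective h)))
  set g := f.comp σ
  have hgs : ∀ i, g i ∈ s := fun i => (e.symm (σ i)).2
  have hg0 : g 0 = u := by simp [g, h0, hf]
  have hg1 : g 1 = v := by simp [g, h1, hf]
  have hg2 : g 2 = w := by simp [g, h2, hf]
  clear_value g
  refine ⟨g, hg0, hg1, hg2, ?_⟩
  have himage : Finset.univ.map g.toEmbedding = {g 0, g 1, g 2, g 3, g 4, g 5} := by
    ext x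
    simp [Fin.exists_fin_succ, eq_comm]
  rw [← hg0, ← hg1, ← hg2, ← himage]
  refine (Finset.eq_of_subset_of_card_le (fun x hx => ?_) (by simp [hcard])).symm
  obtain ⟨i, -, rfl⟩ := Finset.mem_map.mp hx
  exact hgs i

lemma embedding_mem_Xset [DecidableEq V] (g : cycleGraph 6 ↪g G)
    (hs : IsIndCycle G 6 {g 0, g 1, g 2, g 3, g 4, g 5}) {i : Fin 6} (hi : 3 ≤ i) :
    g i ∈ Xset G (g 0) (g 1) (g 2) :=
  ⟨g.injective.ne (by omega), g.injective.ne (by omega), g.injective.ne (by omega), _, hs,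
    by simp, by simp, by simp, by fin_cases i <;> simp⟩

lemma embedding_mem_X3set_X2set_X1set [DecidableEq V] (g : cycleGraph 6 ↪g G)
    (hs : IsIndCycle G 6 {g 0, g 1, g 2, g 3, g 4, g 5}) :
    g 3 ∈ X3set G (g 0) (g 1) (g 2) ∧ g 4 ∈ X2set G (g 0) (g 1) (g 2) ∧
      g 5 ∈ X1set G (g 0) (g 1) (g 2) := by
  refine ⟨⟨embedding_mem_Xset g hs (by decide), g.map_adj_iff.mpr (by decide)⟩,
    ⟨embedding_mem_Xset g hs (by decide), ?_⟩,
    ⟨embedding_mem_Xset g hs (by decide), g.map_adj_iff.mpr (by decide)⟩⟩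
  rintro (⟨-, h⟩ | ⟨-, h⟩) <;> exact absurd (g.map_adj_iff.mp h) (by decide)

lemma exists_embedding_of_mem_Xset [DecidableEq V] {a : V} (ha : a ∈ Xset G u v w)
    (hu : G.Adj v u) (hw : G.Adj v w) (huw : u ≠ w) :
    ∃ g : cycleGraph 6 ↪g G, g 0 = u ∧ g 1 = v ∧ g 2 = w ∧
      IsIndCycle G 6 {g 0, g 1, g 2, g 3, g 4, g 5} ∧ (a = g 3 ∨ a = g 4 ∨ a = g 5) := by
  obtain ⟨hau, hav, haw, s, hs, hus, hvs, hws, has⟩ := ha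
  obtain ⟨g, rfl, rfl, rfl, rfl⟩ := hs.exists_embedding hus hvs hws hu hw huw
  refine ⟨g, rfl, rfl, rfl, hs, ?_⟩
  simp only [Finset.mem_insert, Finset.mem_singleton] at has
  tauto

lemma disjoint_X1set_X3set (hu : G.Adj v u) (hw : G.Adj v w) (huw : u ≠ w) :
    Disjoint (X1set G u v w) (X3set G u v w) := by
  classical
  rw [Set.disjoint_left]
  rintro a ⟨ha, hua⟩ ⟨-, hwa⟩
  obtain ⟨g, rfl, rfl, rfl, -, rfl | rfl | rfl⟩ := exists_embedding_of_mem_Xset ha hu hw huw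
  · exact absurd (g.map_adj_iff.mp hua) (by decide)
  · exact absurd (g.map_adj_iff.mp hua) (by decide)
  · exact absurd (g.map_adj_iff.mp hwa) (by decide)

lemma exists_adj_X3set_of_mem_X2set {a : V} (ha : a ∈ X2set G u v w)
    (hu : G.Adj v u) (hw : G.Adj v w) (huw : u ≠ w) : ∃ b ∈ X3set G u v w, G.Adj a b := by
  classical
  obtain ⟨haX, ha13⟩ := ha
  obtain ⟨g, rfl, rfl, rfl, hs, rfl | rfl | rfl⟩ := exists_embedding_of_mem_Xset haX hu hw huw
  · exact absurd (Or.inr ⟨haX, g.map_adj_iff.mpr (by decide)⟩) ha13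
  · exact ⟨g 3, (embedding_mem_X3set_X2set_X1set g hs).1, g.map_adj_iff.mpr (by decide)⟩
  · exact absurd (Or.inl ⟨haX, g.map_adj_iff.mpr (by decide)⟩) ha13

lemma disjoint_X1set_X2set : Disjoint (X1set G u v w) (X2set G u v w) :=
  Set.disjoint_sdiff_right.mono_left Set.subset_union_left

lemma Xset_swap : Xset G w v u = Xset G u v w := by
  ext a
  constructor <;> rintro ⟨h₁, h₂, h₃, s, hs, h₄, h₅, h₆, h₇⟩ <;>
    exact ⟨h₃, h₂, h₁, s, hs, h₆, h₅, h₄, h₇⟩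

lemma X1set_swap : X1set G w v u = X3set G u v w := by
  rw [X1set, X3set, Xset_swap]

lemma X2set_swap : X2set G w v u = X2set G u v w := by
  rw [X2set, X2set, X1set_swap, ← X1set_swap (u := w) (w := u), Set.union_comm, Xset_swap]

lemma isAcyclic_bipBetween_X1set_X2set
    (hK : ¬ IsMinorOf (completeBipartiteGraph (Fin 3) (Fin 3)) G)
    (hu : G.Adj v u) (hw : G.Adj v w) (huw : u ≠ w) :
    (bipBetween G (X1set G u v w) (X2set G u v w)).IsAcyclic := by
  by_contra h
  have hX : ∀ a ∈ X1set G u v w ∪ X2set G u v w, a ≠ u ∧ a ≠ v ∧ a ≠ w := by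
    rintro a (⟨ha, -⟩ | ⟨ha, -⟩) <;> exact ⟨ha.1, ha.2.1, ha.2.2.1⟩
  refine hK (isMinorOf_K33_of_not_isAcyclic_bipBetween (a := u)
    (Q := insert v (insert w (X3set G u v w))) disjoint_X1set_X2set ?_ ?_
    (fun huX => (hX u huX).1 rfl) ?_ (fun _ ha => ha.2) ?_ ⟨v, Or.inl rfl, hu.symm⟩ h)
  · rw [Set.disjoint_right]
    rintro a ha (rfl | rfl | ha₃)
    · exact (hX a ha).2.1 rfl
    · exact (hX a ha).2.2 rfl
    · rcases ha with ha₁ | ha₂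
      · exact Set.disjoint_left.mp (disjoint_X1set_X3set hu hw huw) ha₁ ha₃
      · exact ha₂.2 (Or.inr ha₃)
  · rintro (h | h | h)
    exacts [hu.ne' h, huw h, h.1.1 rfl]
  · refine connected_induce_of_forall_adj (Or.inr (Or.inl rfl)) ?_
    rintro t (rfl | rfl | ht) htw
    exacts [hw.symm, (htw rfl).elim, ht.2]
  · intro t ht
    obtain ⟨b, hb, htb⟩ := exists_adj_X3set_of_mem_X2set ht hu hw huw
    exact ⟨b, Or.inr (Or.inr hb), htb⟩

lemma ncard_indCycles_le_of_isAcyclic [Finite V] (hu : G.Adj v u) (hw : G.Adj v w)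
    (huw : u ≠ w) (hB : (bipBetween G (X1set G u v w) (X2set G u v w)).IsAcyclic) :
    {s : Finset V | IsIndCycle G 6 s ∧ u ∈ s ∧ v ∈ s ∧ w ∈ s}.ncard ≤
      (X3set G u v w).ncard * ((X1set G u v w).ncard + (X2set G u v w).ncard - 1) := by
  classical
  set P := {p : V × V | p.1 ∈ X2set G u v w ∧ p.2 ∈ X1set G u v w ∧ G.Adj p.1 p.2}
  have hcover : {s : Finset V | IsIndCycle G 6 s ∧ u ∈ s ∧ v ∈ s ∧ w ∈ s} ⊆
      (fun q : V × V × V => ({u, v, w, q.1, q.2.1, q.2.2} : Finset V)) ''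
        (X3set G u v w ×ˢ P) := by
    rintro s ⟨hs, hus, hvs, hws⟩
    obtain ⟨g, rfl, rfl, rfl, rfl⟩ := hs.exists_embedding hus hvs hws hu hw huw
    obtain ⟨h₃, h₄, h₅⟩ := embedding_mem_X3set_X2set_X1set g hs
    exact ⟨(g 3, g 4, g 5), ⟨h₃, h₄, h₅, g.map_adj_iff.mpr (by decide)⟩, rfl⟩
  calc _ ≤ (_ '' (X3set G u v w ×ˢ P)).ncard := Set.ncard_le_ncard hcover
    _ ≤ (X3set G u v w ×ˢ P).ncard := Set.ncard_image_le
    _ = (X3set G u v w).ncard * P.ncard := Set.ncard_prod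
    _ ≤ _ := Nat.mul_le_mul_left _ (hB.ncard_adj_pairs_le disjoint_X1set_X2set)

end Hexagons

theorem stmt2_general {V : Type*} [Fintype V] (G : SimpleGraph V) (hG : G.Planar)
    (v u w : V) (huw : u ≠ w) (hu : G.Adj v u) (hw : G.Adj v w) :
    (bipBetween G (X1set G u v w) (X2set G u v w)).IsAcyclic ∧
    (bipBetween G (X2set G u v w) (X3set G u v w)).IsAcyclic ∧
    {s : Finset V | IsIndCycle G 6 s ∧ u ∈ s ∧ v ∈ s ∧ w ∈ s}.ncard ≤
      (X3set G u v w).ncard * ((X1set G u v w).ncard + (X2set G u v w).ncard - 1) ∧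
    {s : Finset V | IsIndCycle G 6 s ∧ u ∈ s ∧ v ∈ s ∧ w ∈ s}.ncard ≤
      (X1set G u v w).ncard * ((X2set G u v w).ncard + (X3set G u v w).ncard - 1) := by
  have h12 := isAcyclic_bipBetween_X1set_X2set hG.2 hu hw huw
  have h32 := isAcyclic_bipBetween_X1set_X2set hG.2 hw hu huw.symm
  have hcount := ncard_indCycles_le_of_isAcyclic hw hu huw.symm h32
  have hcycles : {s : Finset V | IsIndCycle G 6 s ∧ w ∈ s ∧ v ∈ s ∧ u ∈ s} =
      {s : Finset V | IsIndCycle G 6 s ∧ u ∈ s ∧ v ∈ s ∧ w ∈ s} := by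
    ext s
    simp only [Set.mem_ofPred_eq]
    tauto
  rw [X1set_swap, X2set_swap] at h32
  rw [hcycles, X1set_swap, X2set_swap, ← X1set_swap (u := w) (w := u), Nat.add_comm] at hcount
  exact ⟨h12, isAcyclic_bipBetween_comm.mp h32,
    ncard_indCycles_le_of_isAcyclic hu hw huw h12, hcount⟩

theorem stmt2 {V : Type*} [Fintype V] (G : SimpleGraph V) (hG : G.Planar)
    (v u w : V) (huw : u ≠ w) (hu : G.Adj v u) (hw : G.Adj v w)
    (hex : ∃ s : Finset V, IsIndCycle G 6 s ∧ u ∈ s ∧ v ∈ s ∧ w ∈ s) :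
    (bipBetween G (X1set G u v w) (X2set G u v w)).IsAcyclic ∧
    (bipBetween G (X2set G u v w) (X3set G u v w)).IsAcyclic ∧
    {s : Finset V | IsIndCycle G 6 s ∧ u ∈ s ∧ v ∈ s ∧ w ∈ s}.ncard ≤
      (X3set G u v w).ncard * ((X1set G u v w).ncard + (X2set G u v w).ncard - 1) ∧
    {s : Finset V | IsIndCycle G 6 s ∧ u ∈ s ∧ v ∈ s ∧ w ∈ s}.ncard ≤
      (X1set G u v w).ncard * ((X2set G u v w).ncard + (X3set G u v w).ncard - 1) :=
  stmt2_general G hG v u w huw hu hw
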